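/- arXiv:1003.1469 — 2 statements merged into one kernel-verified Lean document; each statement's English description precedes it below -/
import Mathlib

section
/- Let n ≥ 2 and let U be a nonempty convex open subset of ℝⁿ. For every torsion-free affine connection Γ on U there exists a smooth 1-form A_a : U → ℝ such that the projectively equivalent connection Γ̂^a_{bc} = Γ^a_{bc} + δ^a_c A_b + δ^a_b A_c has symmetric projective Schouten tensor: P̂_{ab} = P̂_{ba} at every point of U. In other words, locally every projective class of torsion-free connections contains a special connection. -/
open scoped BigOperators

noncomputable section

/-- Partial derivative of `f` in the `b`-th coordinate direction at `x`. -/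
def pd {n : ℕ} (b : Fin n) (f : (Fin n → ℝ) → ℝ) (x : Fin n → ℝ) : ℝ :=
  fderiv ℝ f x (Pi.single b 1)

/-- Kronecker delta. -/
def kd {n : ℕ} (a b : Fin n) : ℝ := if a = b then 1 else 0

/-- A torsion-free affine connection on `U`, given by smooth coefficients `Γ^a_{bc}`,
symmetric in the lower indices. -/
def IsConn {n : ℕ} (U : Set (Fin n → ℝ))
    (Γ : Fin n → Fin n → Fin n → (Fin n → ℝ) → ℝ) : Prop :=
  (∀ a b c, ContDiffOn ℝ (⊤ : ℕ∞) (Γ a b c) U) ∧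
  (∀ a b c, ∀ x ∈ U, Γ a b c x = Γ a c b x)

/-- Curvature tensor `R^a_{bcd}` of the connection `Γ`. -/
def curv {n : ℕ} (Γ : Fin n → Fin n → Fin n → (Fin n → ℝ) → ℝ)
    (a b c d : Fin n) (x : Fin n → ℝ) : ℝ :=
  pd c (Γ a b d) x - pd d (Γ a b c) x
    + ∑ e, (Γ a e c x * Γ e b d x - Γ a e d x * Γ e b c x)

/-- Ricci tensor `R_{bd} = Σ_a R^a_{bad}`. -/
def ricci {n : ℕ} (Γ : Fin n → Fin n → Fin n → (Fin n → ℝ) → ℝ)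
    (b d : Fin n) (x : Fin n → ℝ) : ℝ :=
  ∑ a, curv Γ a b a d x

/-- Projective Schouten tensor `P_{ab} = (1/(n-1)) R_{(ab)} - (1/(n+1)) R_{[ab]}`. -/
def schouten {n : ℕ} (Γ : Fin n → Fin n → Fin n → (Fin n → ℝ) → ℝ)
    (a b : Fin n) (x : Fin n → ℝ) : ℝ :=
  (1/((n : ℝ) - 1)) * ((ricci Γ a b x + ricci Γ b a x)/2)
    - (1/((n : ℝ) + 1)) * ((ricci Γ a b x - ricci Γ b a x)/2)

/-- Projective Weyl tensor
`W^a_{bcd} = R^a_{bcd} - δ^a_c P_{db} + δ^a_d P_{cb} + 2 δ^a_b P_{[cd]}`. -/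
def weyl {n : ℕ} (Γ : Fin n → Fin n → Fin n → (Fin n → ℝ) → ℝ)
    (a b c d : Fin n) (x : Fin n → ℝ) : ℝ :=
  curv Γ a b c d x - kd a c * schouten Γ d b x + kd a d * schouten Γ c b x
    + 2 * kd a b * ((schouten Γ c d x - schouten Γ d c x)/2)

/-- Covariant derivative `∇_a P_{bc}` of the projective Schouten tensor. -/
def covSchouten {n : ℕ} (Γ : Fin n → Fin n → Fin n → (Fin n → ℝ) → ℝ)
    (a b c : Fin n) (x : Fin n → ℝ) : ℝ :=
  pd a (schouten Γ b c) x - (∑ e, Γ e b a x * schouten Γ e c x)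
    - (∑ e, Γ e c a x * schouten Γ b e x)

/-- Projective Cotton tensor `Y_{bca} = ∇_b P_{ca} - ∇_c P_{ba}`. -/
def cotton {n : ℕ} (Γ : Fin n → Fin n → Fin n → (Fin n → ℝ) → ℝ)
    (b c a : Fin n) (x : Fin n → ℝ) : ℝ :=
  covSchouten Γ b c a x - covSchouten Γ c b a x

/-- Covariant derivative `∇_e W^a_{bcd}` of the projective Weyl tensor. -/
def covWeyl {n : ℕ} (Γ : Fin n → Fin n → Fin n → (Fin n → ℝ) → ℝ)
    (e a b c d : Fin n) (x : Fin n → ℝ) : ℝ :=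
  pd e (weyl Γ a b c d) x + (∑ f, Γ a f e x * weyl Γ f b c d x)
    - (∑ f, Γ f b e x * weyl Γ a f c d x)
    - (∑ f, Γ f c e x * weyl Γ a b f d x)
    - (∑ f, Γ f d e x * weyl Γ a b c f x)

/-- Covariant derivative `∇_a Y_{bcd}` of the projective Cotton tensor. -/
def covCotton {n : ℕ} (Γ : Fin n → Fin n → Fin n → (Fin n → ℝ) → ℝ)
    (a b c d : Fin n) (x : Fin n → ℝ) : ℝ :=
  pd a (cotton Γ b c d) x - (∑ e, Γ e b a x * cotton Γ e c d x)
    - (∑ e, Γ e c a x * cotton Γ b e d x)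
    - (∑ e, Γ e d a x * cotton Γ b c e x)

/-- Covariant derivative `∇_a A_b` of a 1-form `A`. -/
def cov1 {n : ℕ} (Γ : Fin n → Fin n → Fin n → (Fin n → ℝ) → ℝ)
    (a b : Fin n) (A : Fin n → (Fin n → ℝ) → ℝ) (x : Fin n → ℝ) : ℝ :=
  pd a (A b) x - ∑ e, Γ e b a x * A e x

/-- Covariant derivative `∇_c g^{ab}` of a (2,0)-tensor `g`. -/
def covUp2 {n : ℕ} (Γ : Fin n → Fin n → Fin n → (Fin n → ℝ) → ℝ)
    (c a b : Fin n) (g : Fin n → Fin n → (Fin n → ℝ) → ℝ) (x : Fin n → ℝ) : ℝ :=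
  pd c (g a b) x + (∑ e, Γ a e c x * g e b x) + (∑ e, Γ b e c x * g a e x)

/-- Covariant derivative `∇_a μ^b` of a vector field `μ`. -/
def covVec {n : ℕ} (Γ : Fin n → Fin n → Fin n → (Fin n → ℝ) → ℝ)
    (a b : Fin n) (μ : Fin n → (Fin n → ℝ) → ℝ) (x : Fin n → ℝ) : ℝ :=
  pd a (μ b) x + ∑ e, Γ b e a x * μ e x

/-- A smooth pseudo-Riemannian metric on `U`: smooth, symmetric, and
nondegenerate at every point of `U`. -/
def IsMetric {n : ℕ} (U : Set (Fin n → ℝ))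
    (g : Fin n → Fin n → (Fin n → ℝ) → ℝ) : Prop :=
  (∀ a b, ContDiffOn ℝ (⊤ : ℕ∞) (g a b) U) ∧
  (∀ a b, ∀ x ∈ U, g a b x = g b a x) ∧
  (∀ x ∈ U, (Matrix.of fun a b => g a b x).det ≠ 0)

/-- Pointwise inverse `g^{ab}` of a metric (or pointwise matrix inverse of any
2-index field). -/
def minv {n : ℕ} (g : Fin n → Fin n → (Fin n → ℝ) → ℝ)
    (a b : Fin n) (x : Fin n → ℝ) : ℝ :=
  (Matrix.of fun i j => g i j x)⁻¹ a b

/-- Levi-Civita connection coefficients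
`Γ^a_{bc} = ½ Σ_d g^{ad}(∂_b g_{dc} + ∂_c g_{bd} - ∂_d g_{bc})` of a metric `g`. -/
def levicivita {n : ℕ} (g : Fin n → Fin n → (Fin n → ℝ) → ℝ)
    (a b c : Fin n) (x : Fin n → ℝ) : ℝ :=
  (1/2) * ∑ d, minv g a d x * (pd b (g d c) x + pd c (g b d) x - pd d (g b c) x)

/-- Ricci scalar `R = Σ_{a,b} g^{ab} R_{ab}` of a metric `g`. -/
def ricciScalar {n : ℕ} (g : Fin n → Fin n → (Fin n → ℝ) → ℝ)
    (x : Fin n → ℝ) : ℝ :=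
  ∑ a, ∑ b, minv g a b x * ricci (levicivita g) a b x

/-- Metric Schouten tensor `LCP_{ab} = (1/(n-2))(R_{ab} - R g_{ab}/(2(n-1)))`. -/
def lcSchouten {n : ℕ} (g : Fin n → Fin n → (Fin n → ℝ) → ℝ)
    (a b : Fin n) (x : Fin n → ℝ) : ℝ :=
  (1/((n : ℝ) - 2)) *
    (ricci (levicivita g) a b x - ricciScalar g x * g a b x / (2*((n : ℝ) - 1)))

/-- Metric (conformal) Weyl tensor of a metric `g`. -/
def lcWeyl {n : ℕ} (g : Fin n → Fin n → (Fin n → ℝ) → ℝ)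
    (a b c d : Fin n) (x : Fin n → ℝ) : ℝ :=
  curv (levicivita g) a b c d x - kd a c * lcSchouten g d b x
    + kd a d * lcSchouten g c b x
    - (∑ e, g b d x * minv g a e x * lcSchouten g e c x)
    + (∑ e, g b c x * minv g a e x * lcSchouten g e d x)

/-- `Γ'` is projectively equivalent to `Γ` on `U`:
`Γ'^a_{bc} = Γ^a_{bc} + δ^a_c A_b + δ^a_b A_c` for some smooth 1-form `A`. -/
def ProjEquiv {n : ℕ} (U : Set (Fin n → ℝ))
    (Γ' Γ : Fin n → Fin n → Fin n → (Fin n → ℝ) → ℝ) : Prop :=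
  ∃ A : Fin n → (Fin n → ℝ) → ℝ, (∀ a, ContDiffOn ℝ (⊤ : ℕ∞) (A a) U) ∧
    ∀ a b c, ∀ x ∈ U, Γ' a b c x = Γ a b c x + kd a c * A b x + kd a b * A c x

/-- A connection is special on `U` if its projective Schouten tensor is symmetric. -/
def IsSpecial {n : ℕ} (U : Set (Fin n → ℝ))
    (Γ : Fin n → Fin n → Fin n → (Fin n → ℝ) → ℝ) : Prop :=
  ∀ a b, ∀ x ∈ U, schouten Γ a b x = schouten Γ b a x

/-- A smooth symmetric (2,0)-tensor field on `U`. -/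
def SmoothSym2 {n : ℕ} (U : Set (Fin n → ℝ))
    (g : Fin n → Fin n → (Fin n → ℝ) → ℝ) : Prop :=
  (∀ a b, ContDiffOn ℝ (⊤ : ℕ∞) (g a b) U) ∧ (∀ a b, ∀ x ∈ U, g a b x = g b a x)

/-- The prolonged metrisability system (3.10) for `(g^{ab}, μ^a, ρ)`:
`∇_c g^{ab} = μ^a δ^b_c + μ^b δ^a_c`,
`∇_a μ^b = ρ δ^b_a - Σ_c P_{ac} g^{bc} - (1/n) Σ_{c,d} W^b_{cda} g^{cd}`,
`∇_a ρ = -2 Σ_b P_{ab} μ^b + (2/n) Σ_{b,c} Y_{abc} g^{bc}`. -/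
def ProlongedSys {n : ℕ} (U : Set (Fin n → ℝ))
    (Γ : Fin n → Fin n → Fin n → (Fin n → ℝ) → ℝ)
    (g : Fin n → Fin n → (Fin n → ℝ) → ℝ)
    (μ : Fin n → (Fin n → ℝ) → ℝ) (ρ : (Fin n → ℝ) → ℝ) : Prop :=
  (∀ a b c, ∀ x ∈ U, covUp2 Γ c a b g x = μ a x * kd b c + μ b x * kd a c) ∧
  (∀ a b, ∀ x ∈ U, covVec Γ a b μ x =
      ρ x * kd b a - (∑ c, schouten Γ a c x * g b c x)
        - (1/(n : ℝ)) * ∑ c, ∑ d, weyl Γ b c d a x * g c d x) ∧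
  (∀ a, ∀ x ∈ U, pd a ρ x =
      -2 * (∑ b, schouten Γ a b x * μ b x)
        + (2/(n : ℝ)) * ∑ b, ∑ c, cotton Γ a b c x * g b c x)

/-- The tensor `T_{[ed]}^{cb}{}_{af}` of Proposition 3.6 (eq. (3.12)). -/
def Ttensor {n : ℕ} (Γ : Fin n → Fin n → Fin n → (Fin n → ℝ) → ℝ)
    (e d c b a f : Fin n) (x : Fin n → ℝ) : ℝ :=
  (1/2) * ((kd c a * weyl Γ b f e d x + kd c f * weyl Γ b a e d x)/2)
  + (1/2) * ((kd b a * weyl Γ c f e d x + kd b f * weyl Γ c a e d x)/2)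
  + (1/(n : ℝ)) * ((((weyl Γ c a f e x + weyl Γ c f a e x)/2) * kd b d
      - ((weyl Γ c a f d x + weyl Γ c f a d x)/2) * kd b e)/2)
  + (1/(n : ℝ)) * ((((weyl Γ b a f e x + weyl Γ b f a e x)/2) * kd c d
      - ((weyl Γ b a f d x + weyl Γ b f a d x)/2) * kd c e)/2)

/-- The tensor `S_{[ae]}^b{}_{cd}` of Proposition 3.8. -/
def Stensor {n : ℕ} (Γ : Fin n → Fin n → Fin n → (Fin n → ℝ) → ℝ)
    (a e b c d : Fin n) (x : Fin n → ℝ) : ℝ :=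
  (((n : ℝ) - 2)/2) * ((cotton Γ e a c x * kd b d + cotton Γ e a d x * kd b c)/2)
  + (covWeyl Γ c b d e a x + covWeyl Γ d b c e a x)/2
  + (((covWeyl Γ a b c d e x + covWeyl Γ a b d c e x)/2)
      - ((covWeyl Γ e b c d a x + covWeyl Γ e b d c a x)/2))/2

/-- The tensor `U_{[ab]cd}` of Proposition 3.9. -/
def Utensor {n : ℕ} (Γ : Fin n → Fin n → Fin n → (Fin n → ℝ) → ℝ)
    (a b c d : Fin n) (x : Fin n → ℝ) : ℝ :=
  (((covCotton Γ a b c d x + covCotton Γ a b d c x)/2)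
      - ((covCotton Γ b a c d x + covCotton Γ b a d c x)/2))/2
  + ∑ e, (((weyl Γ e c d a x + weyl Γ e d c a x)/2) * schouten Γ b e x
      - ((weyl Γ e c d b x + weyl Γ e d c b x)/2) * schouten Γ a e x)/2

end


-- auxiliary lemma: pd only depends on the germ of the function
theorem pd_congr_nhds {n : ℕ} {b : Fin n} {f g : (Fin n → ℝ) → ℝ} {x : Fin n → ℝ}
    (h : f =ᶠ[nhds x] g) : pd b f x = pd b g x := by
  unfold pd; rw [h.fderiv_eq]

/-- On a nonempty convex open `U ⊆ ℝⁿ` (`n ≥ 2`), every projective class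
of torsion-free connections contains a special connection: there is a smooth 1-form `A`
such that the projectively equivalent connection has symmetric projective Schouten
tensor. -/
theorem exists_special_connection {n : ℕ} (hn : 2 ≤ n)
    (U : Set (Fin n → ℝ)) (hUo : IsOpen U) (hUc : Convex ℝ U) (hUne : U.Nonempty)
    (Γ : Fin n → Fin n → Fin n → (Fin n → ℝ) → ℝ) (hΓ : IsConn U Γ) :
    ∃ A : Fin n → (Fin n → ℝ) → ℝ, (∀ a, ContDiffOn ℝ (⊤ : ℕ∞) (A a) U) ∧
      ∀ a b : Fin n, ∀ x ∈ U,
        schouten (fun a b c y => Γ a b c y + kd a c * A b y + kd a b * A c y) a b x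
          = schouten (fun a b c y => Γ a b c y + kd a c * A b y + kd a b * A c y) b a x := by
  have hn1 : ((n : ℝ) + 1) ≠ 0 := by positivity
  set A : Fin n → (Fin n → ℝ) → ℝ :=
    fun b x => (-(1/((n : ℝ)+1))) * ∑ a, Γ a b a x with hA
  refine ⟨A, ?_, ?_⟩
  · intro b
    exact contDiffOn_const.mul (ContDiffOn.sum fun a _ => hΓ.1 a b a)
  set Γ' : Fin n → Fin n → Fin n → (Fin n → ℝ) → ℝ :=
    fun a b c y => Γ a b c y + kd a c * A b y + kd a b * A c y with hΓ'
  -- symmetry of Γ' in lower indices on U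
  have hsym' : ∀ a b c, ∀ y ∈ U, Γ' a b c y = Γ' a c b y := by
    intro a b c y hy
    simp only [hΓ']
    rw [hΓ.2 a b c y hy]; ring
  -- trace of Γ' vanishes identically
  have htrace : ∀ b y, ∑ a, Γ' a b a y = 0 := by
    intro b y
    have h1 : ∑ a : Fin n, Γ' a b a y
        = (∑ a, Γ a b a y) + ((∑ a : Fin n, kd a a * A b y) + ∑ a, kd a b * A a y) := by
      simp only [hΓ']
      rw [Finset.sum_add_distrib, Finset.sum_add_distrib]
      ring
    have h2 : ∑ a : Fin n, kd a a * A b y = (n : ℝ) * A b y := by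
      simp [kd]
    have h3 : ∑ a : Fin n, kd a b * A a y = A b y := by
      simp [kd, ite_mul]
    rw [h1, h2, h3, hA]
    field_simp
    ring
  -- differentiability
  have hdiffΓ : ∀ a b c, ∀ x ∈ U, DifferentiableAt ℝ (Γ a b c) x := by
    intro a b c x hx
    exact ((hΓ.1 a b c).differentiableOn (by simp)).differentiableAt (hUo.mem_nhds hx)
  have hdiffA : ∀ b, ∀ x ∈ U, DifferentiableAt ℝ (A b) x := by
    intro b x hx
    exact (DifferentiableAt.fun_sum fun a _ => hdiffΓ a b a x hx).const_mul _
  have hdiffΓ' : ∀ a b c, ∀ x ∈ U, DifferentiableAt ℝ (Γ' a b c) x := by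
    intro a b c x hx
    exact ((hdiffΓ a b c x hx).add ((hdiffA b x hx).const_mul _)).add
      ((hdiffA c x hx).const_mul _)
  -- the sum of pd of traces vanishes
  have hpd_sum : ∀ b d, ∀ x ∈ U, ∑ a, pd d (Γ' a b a) x = 0 := by
    intro b d x hx
    have h0 : (fun y => ∑ a, Γ' a b a y) = fun _ => (0 : ℝ) := funext (htrace b)
    calc ∑ a, pd d (Γ' a b a) x
        = (∑ a, fderiv ℝ (Γ' a b a) x) (Pi.single d 1) := by
          rw [ContinuousLinearMap.sum_apply]; rfl
      _ = fderiv ℝ (fun y => ∑ a, Γ' a b a y) x (Pi.single d 1) := by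
          rw [fderiv_fun_sum fun a _ => hdiffΓ' a b a x hx]
      _ = 0 := by rw [h0, fderiv_fun_const]; simp
  -- Ricci is symmetric for Γ'
  have hricci : ∀ b d, ∀ x ∈ U, ricci Γ' b d x = ricci Γ' d b x := by
    intro b d x hx
    have hsplit : ∀ b d : Fin n, ricci Γ' b d x
        = (∑ a, pd a (Γ' a b d) x) - (∑ a, pd d (Γ' a b a) x)
          + ∑ a, ∑ e, (Γ' a e a x * Γ' e b d x - Γ' a e d x * Γ' e b a x) := by
      intro b d
      unfold ricci curv
      rw [Finset.sum_add_distrib, Finset.sum_sub_distrib]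
    rw [hsplit b d, hsplit d b, hpd_sum b d x hx, hpd_sum d b x hx]
    have h1 : ∑ a, pd a (Γ' a b d) x = ∑ a, pd a (Γ' a d b) x := by
      refine Finset.sum_congr rfl fun a _ => ?_
      refine pd_congr_nhds (Filter.eventuallyEq_of_mem (hUo.mem_nhds hx) fun y hy => ?_)
      exact hsym' a b d y hy
    have h2 : ∑ a, ∑ e, (Γ' a e a x * Γ' e b d x - Γ' a e d x * Γ' e b a x)
        = ∑ a, ∑ e, (Γ' a e a x * Γ' e d b x - Γ' a e b x * Γ' e d a x) := by
      have h2a : ∀ a e : Fin n, Γ' a e a x * Γ' e b d x = Γ' a e a x * Γ' e d b x := by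
        intro a e; rw [hsym' e b d x hx]
      have h2b : ∑ a, ∑ e, Γ' a e d x * Γ' e b a x
          = ∑ a, ∑ e, Γ' a e b x * Γ' e d a x := by
        rw [Finset.sum_comm]
        refine Finset.sum_congr rfl fun i _ => Finset.sum_congr rfl fun j _ => ?_
        rw [hsym' j i d x hx, hsym' i b j x hx, mul_comm]
      calc ∑ a, ∑ e, (Γ' a e a x * Γ' e b d x - Γ' a e d x * Γ' e b a x)
          = (∑ a, ∑ e, Γ' a e a x * Γ' e b d x) - ∑ a, ∑ e, Γ' a e d x * Γ' e b a x := by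
            simp [Finset.sum_sub_distrib]
        _ = (∑ a, ∑ e, Γ' a e a x * Γ' e d b x) - ∑ a, ∑ e, Γ' a e b x * Γ' e d a x := by
            rw [h2b]
            congr 1
            exact Finset.sum_congr rfl fun a _ => Finset.sum_congr rfl fun e _ => h2a a e
        _ = ∑ a, ∑ e, (Γ' a e a x * Γ' e d b x - Γ' a e b x * Γ' e d a x) := by
            simp [Finset.sum_sub_distrib]
    rw [h1, h2]
  intro a b x hx
  unfold schouten
  rw [hricci a b x hx]
end

section
/- Let n ≥ 3 and let ĝ_{ab} be a smooth pseudo-Riemannian metric on U with Levi-Civita connection Γ̂. Then: (i) the projective Schouten tensor of Γ̂ is symmetric, P̂_{ab} = P̂_{ba}; and (ii) for every torsion-free connection Γ projectively equivalent to Γ̂, the projective Weyl tensor W^a_{bcd} of Γ satisfies Σ_{e,b,c} ĝ_{ae} ĝ^{bc} W^e_{bcd} = Σ_{e,b,c} ĝ_{de} ĝ^{bc} W^e_{bca} for all a, d at every point of U. -/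
open scoped BigOperators

section Helpers
open Filter

variable {n : ℕ} {U : Set (Fin n → ℝ)} {x : Fin n → ℝ}

lemma sum_kd_mul (d : Fin n) (F : Fin n → ℝ) : ∑ e, kd e d * F e = F d := by
  simp [kd, ite_mul, Finset.sum_ite_eq]

lemma sum_kd_mul' (d : Fin n) (F : Fin n → ℝ) : ∑ e, kd d e * F e = F d := by
  simp [kd, ite_mul, Finset.sum_ite_eq']

lemma pd_congr (hUo : IsOpen U) {f h : (Fin n → ℝ) → ℝ}
    (hfh : ∀ y ∈ U, f y = h y) (hx : x ∈ U) (b : Fin n) : pd b f x = pd b h x := by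
  have hev : f =ᶠ[nhds x] h := Filter.eventuallyEq_of_mem (hUo.mem_nhds hx) hfh
  simp only [pd, hev.fderiv_eq]

lemma pd_add {f h : (Fin n → ℝ) → ℝ} (hf : DifferentiableAt ℝ f x)
    (hh : DifferentiableAt ℝ h x) (b : Fin n) :
    pd b (fun y => f y + h y) x = pd b f x + pd b h x := by
  simp only [pd, fderiv_fun_add hf hh, ContinuousLinearMap.add_apply]

lemma pd_mul {f h : (Fin n → ℝ) → ℝ} (hf : DifferentiableAt ℝ f x)
    (hh : DifferentiableAt ℝ h x) (b : Fin n) :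
    pd b (fun y => f y * h y) x = f x * pd b h x + h x * pd b f x := by
  simp only [pd, fderiv_fun_mul hf hh, ContinuousLinearMap.add_apply,
    ContinuousLinearMap.smul_apply, smul_eq_mul]

lemma pd_const_mul {f : (Fin n → ℝ) → ℝ} (hf : DifferentiableAt ℝ f x) (c : ℝ) (b : Fin n) :
    pd b (fun y => c * f y) x = c * pd b f x := by
  simp only [pd, fderiv_const_mul hf c, ContinuousLinearMap.smul_apply, smul_eq_mul]

lemma pd_sum {ι : Type*} (s : Finset ι) {F : ι → (Fin n → ℝ) → ℝ}
    (h : ∀ i ∈ s, DifferentiableAt ℝ (F i) x) (b : Fin n) :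
    pd b (fun y => ∑ i ∈ s, F i y) x = ∑ i ∈ s, pd b (F i) x := by
  simp only [pd, fderiv_fun_sum h]
  simp

lemma contDiffAt_pd {f : (Fin n → ℝ) → ℝ} (hUo : IsOpen U) (hf : ContDiffOn ℝ (⊤ : ℕ∞) f U)
    (hx : x ∈ U) (b : Fin n) : ContDiffAt ℝ (⊤ : ℕ∞) (pd b f) x := by
  have h2 : ContDiffAt ℝ (⊤ : ℕ∞) (fderiv ℝ f) x :=
    ((hf.contDiffAt (hUo.mem_nhds hx)).fderiv_right (by simp))
  exact h2.clm_apply contDiffAt_const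

lemma pd_comm {f : (Fin n → ℝ) → ℝ} (hUo : IsOpen U) (hf : ContDiffOn ℝ (⊤ : ℕ∞) f U)
    (hx : x ∈ U) (b d : Fin n) :
    pd b (pd d f) x = pd d (pd b f) x := by
  have hfx : ContDiffAt ℝ (⊤ : ℕ∞) f x := hf.contDiffAt (hUo.mem_nhds hx)
  have hd1 : DifferentiableAt ℝ (fderiv ℝ f) x :=
    (hfx.fderiv_right (m := (⊤ : ℕ∞)) (by simp)).differentiableAt (by simp)
  have hsymm : IsSymmSndFDerivAt ℝ f x := hfx.isSymmSndFDerivAt (by rw [minSmoothness_of_isRCLikeNormedField]; exact WithTop.coe_le_coe.2 (le_top : (2 : ℕ∞) ≤ ⊤))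
  have expand : ∀ v w : Fin n → ℝ,
      fderiv ℝ (fun y => fderiv ℝ f y v) x w = fderiv ℝ (fderiv ℝ f) x w v := by
    intro v w
    rw [fderiv_clm_apply hd1 (differentiableAt_const v)]
    simp
  show fderiv ℝ (fun y => fderiv ℝ f y (Pi.single d 1)) x (Pi.single b 1)
      = fderiv ℝ (fun y => fderiv ℝ f y (Pi.single b 1)) x (Pi.single d 1)
  rw [expand, expand]
  exact hsymm _ _

end Helpers


section MetricLemmas
open Filter

variable {n : ℕ} {U : Set (Fin n → ℝ)} {x : Fin n → ℝ}
variable {g : Fin n → Fin n → (Fin n → ℝ) → ℝ}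

lemma contDiffAt_finprod {ι : Type*} {s : Finset ι} {f : ι → (Fin n → ℝ) → ℝ}
    (h : ∀ i ∈ s, ContDiffAt ℝ (⊤ : ℕ∞) (f i) x) :
    ContDiffAt ℝ (⊤ : ℕ∞) (fun y => ∏ i ∈ s, f i y) x := by
  classical
  induction s using Finset.induction with
  | empty => simpa using contDiffAt_const
  | @insert i s hi ih =>
      simp only [Finset.prod_insert hi]
      exact (h i (Finset.mem_insert_self i s)).mul
        (ih fun j hj => h j (Finset.mem_insert_of_mem hj))

lemma contDiffAt_entrydet {M : (Fin n → ℝ) → Matrix (Fin n) (Fin n) ℝ}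
    (h : ∀ i j, ContDiffAt ℝ (⊤ : ℕ∞) (fun y => M y i j) x) :
    ContDiffAt ℝ (⊤ : ℕ∞) (fun y => (M y).det) x := by
  have : (fun y => (M y).det)
      = fun y => ∑ σ : Equiv.Perm (Fin n),
          ((Equiv.Perm.sign σ : ℤ) : ℝ) * ∏ i, M y (σ i) i := by
    funext y; rw [Matrix.det_apply']
  rw [this]
  exact ContDiffAt.sum fun σ _ =>
    contDiffAt_const.mul (contDiffAt_finprod fun i _ => h _ _)

lemma contDiffAt_minv (hUo : IsOpen U) (hg : IsMetric U g) (hx : x ∈ U) (a b : Fin n) :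
    ContDiffAt ℝ (⊤ : ℕ∞) (minv g a b) x := by
  have hgC : ∀ i j, ContDiffAt ℝ (⊤ : ℕ∞) (fun y => (Matrix.of fun p q => g p q y) i j) x :=
    fun i j => (hg.1 i j).contDiffAt (hUo.mem_nhds hx)
  have hdet : ContDiffAt ℝ (⊤ : ℕ∞) (fun y => (Matrix.of fun p q => g p q y).det) x :=
    contDiffAt_entrydet hgC
  have hadj : ContDiffAt ℝ (⊤ : ℕ∞) (fun y => (Matrix.of fun p q => g p q y).adjugate a b) x := by
    simp only [Matrix.adjugate_apply]
    apply contDiffAt_entrydet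
    intro i j
    by_cases hib : i = b
    · simp only [Matrix.updateRow_apply, hib, if_true]
      exact contDiffAt_const
    · simp only [Matrix.updateRow_apply, hib, if_false]
      exact hgC i j
  have hmv : minv g a b = fun y => ((Matrix.of fun p q => g p q y).det)⁻¹
      * (Matrix.of fun p q => g p q y).adjugate a b := by
    funext y
    rw [minv, Matrix.inv_def]
    simp [Ring.inverse_eq_inv', Matrix.smul_apply, smul_eq_mul]
  rw [hmv]
  exact (hdet.inv (hg.2.2 x hx)).mul hadj

lemma minv_mul (hg : IsMetric U g) (hx : x ∈ U) (a b : Fin n) :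
    ∑ e, minv g a e x * g e b x = kd a b := by
  have hu : IsUnit (Matrix.of fun p q => g p q x).det :=
    isUnit_iff_ne_zero.2 (hg.2.2 x hx)
  have h1 : ((Matrix.of fun p q => g p q x)⁻¹ * (Matrix.of fun p q => g p q x)) a b
      = ∑ e, minv g a e x * g e b x := by
    rw [Matrix.mul_apply]; rfl
  rw [← h1, Matrix.nonsing_inv_mul _ hu]
  simp [Matrix.one_apply, kd]

lemma minv_symm (hg : IsMetric U g) (hx : x ∈ U) (a b : Fin n) :
    minv g a b x = minv g b a x := by
  have hsym : (Matrix.of fun p q => g p q x).transpose = Matrix.of fun p q => g p q x := by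
    ext i j
    simp only [Matrix.transpose_apply, Matrix.of_apply]
    exact hg.2.1 j i x hx
  have := Matrix.transpose_nonsing_inv (Matrix.of fun p q => g p q x)
  rw [hsym] at this
  calc minv g a b x = ((Matrix.of fun p q => g p q x)⁻¹).transpose b a := rfl
    _ = (Matrix.of fun p q => g p q x)⁻¹ b a := by rw [this]
    _ = minv g b a x := rfl

lemma contDiffAt_g (hUo : IsOpen U) (hg : IsMetric U g) (hx : x ∈ U) (a b : Fin n) :
    ContDiffAt ℝ (⊤ : ℕ∞) (g a b) x := (hg.1 a b).contDiffAt (hUo.mem_nhds hx)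

lemma contDiffAt_lc (hUo : IsOpen U) (hg : IsMetric U g) (hx : x ∈ U) (a b c : Fin n) :
    ContDiffAt ℝ (⊤ : ℕ∞) (levicivita g a b c) x := by
  have : levicivita g a b c = fun y => (1/2 : ℝ) *
      ∑ d, minv g a d y * (pd b (g d c) y + pd c (g b d) y - pd d (g b c) y) := rfl
  rw [this]
  refine contDiffAt_const.mul (ContDiffAt.sum fun d _ => ?_)
  exact (contDiffAt_minv hUo hg hx a d).mul
    (((contDiffAt_pd hUo (hg.1 d c) hx b).add (contDiffAt_pd hUo (hg.1 b d) hx c)).sub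
      (contDiffAt_pd hUo (hg.1 b c) hx d))

lemma diff_g (hUo : IsOpen U) (hg : IsMetric U g) (hx : x ∈ U) (a b : Fin n) :
    DifferentiableAt ℝ (g a b) x :=
  (contDiffAt_g hUo hg hx a b).differentiableAt (by simp)

lemma diff_lc (hUo : IsOpen U) (hg : IsMetric U g) (hx : x ∈ U) (a b c : Fin n) :
    DifferentiableAt ℝ (levicivita g a b c) x :=
  (contDiffAt_lc hUo hg hx a b c).differentiableAt (by simp)

end MetricLemmas


section Geometry
open Filter

variable {n : ℕ} {U : Set (Fin n → ℝ)} {x : Fin n → ℝ}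
variable {g : Fin n → Fin n → (Fin n → ℝ) → ℝ}

lemma pdg_symm (hUo : IsOpen U) (hg : IsMetric U g) (hx : x ∈ U) (c p q : Fin n) :
    pd c (g p q) x = pd c (g q p) x :=
  pd_congr hUo (fun y hy => hg.2.1 p q y hy) hx c

/-- The Levi-Civita connection is symmetric in its lower indices on `U`. -/
lemma lc_symm (hUo : IsOpen U) (hg : IsMetric U g) (hx : x ∈ U) (a b c : Fin n) :
    levicivita g a b c x = levicivita g a c b x := by
  unfold levicivita
  congr 1
  refine Finset.sum_congr rfl fun d _ => ?_
  rw [pdg_symm hUo hg hx b d c, pdg_symm hUo hg hx c b d, pdg_symm hUo hg hx d b c]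
  ring_nf

/-- Metric compatibility of the Levi-Civita connection. -/
lemma compat (hUo : IsOpen U) (hg : IsMetric U g) (hx : x ∈ U) (a b c : Fin n) :
    pd c (g a b) x
      = ∑ e, (levicivita g e a c x * g e b x + levicivita g e b c x * g a e x) := by
  have key : ∀ p q : Fin n, ∑ e, levicivita g e p c x * g e q x
      = (1/2) * (pd p (g q c) x + pd c (g p q) x - pd q (g p c) x) := by
    intro p q
    have expand : ∀ e, levicivita g e p c x * g e q x
        = ∑ d, (pd p (g d c) x + pd c (g p d) x - pd d (g p c) x)
            * ((1/2) * (minv g e d x * g e q x)) := by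
      intro e
      rw [levicivita, mul_assoc, Finset.sum_mul, Finset.mul_sum]
      exact Finset.sum_congr rfl fun d _ => by ring
    have step : ∀ d : Fin n,
        ∑ e, (pd p (g d c) x + pd c (g p d) x - pd d (g p c) x)
            * ((1/2) * (minv g e d x * g e q x))
        = kd d q * ((1/2) * (pd p (g d c) x + pd c (g p d) x - pd d (g p c) x)) := by
      intro d
      have h1 : ∑ e, minv g e d x * g e q x = kd d q := by
        have h0 : ∀ e : Fin n, minv g e d x * g e q x = minv g d e x * g e q x :=
          fun e => by rw [minv_symm hg hx e d]
        rw [Finset.sum_congr rfl fun e _ => h0 e]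
        exact minv_mul hg hx d q
      have h2 : ∑ e, (pd p (g d c) x + pd c (g p d) x - pd d (g p c) x)
            * ((1/2) * (minv g e d x * g e q x))
          = (pd p (g d c) x + pd c (g p d) x - pd d (g p c) x)
            * ((1/2) * ∑ e, minv g e d x * g e q x) := by
        rw [Finset.mul_sum, Finset.mul_sum]
      rw [h2, h1]
      ring
    calc ∑ e, levicivita g e p c x * g e q x
        = ∑ e, ∑ d, (pd p (g d c) x + pd c (g p d) x - pd d (g p c) x)
            * ((1/2) * (minv g e d x * g e q x)) :=
          Finset.sum_congr rfl fun e _ => expand e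
      _ = ∑ d, ∑ e, (pd p (g d c) x + pd c (g p d) x - pd d (g p c) x)
            * ((1/2) * (minv g e d x * g e q x)) := Finset.sum_comm
      _ = ∑ d, kd d q * ((1/2) * (pd p (g d c) x + pd c (g p d) x - pd d (g p c) x)) :=
          Finset.sum_congr rfl fun d _ => step d
      _ = (1/2) * (pd p (g q c) x + pd c (g p q) x - pd q (g p c) x) := by
          rw [sum_kd_mul]
  have h2 : ∑ e, (levicivita g e a c x * g e b x + levicivita g e b c x * g a e x)
      = (∑ e, levicivita g e a c x * g e b x) + ∑ e, levicivita g e b c x * g e a x := by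
    rw [Finset.sum_add_distrib]
    congr 1
    exact Finset.sum_congr rfl fun e _ => by rw [hg.2.1 a e x hx]
  rw [h2, key a b, key b a, pdg_symm hUo hg hx c b a]
  ring

end Geometry


section Curvature
open Filter

variable {n : ℕ} {U : Set (Fin n → ℝ)} {x : Fin n → ℝ}
variable {g : Fin n → Fin n → (Fin n → ℝ) → ℝ}

/-- Antisymmetry of curvature in its last two indices (pointwise, any `Γ`). -/
lemma curv_swap (Γ : Fin n → Fin n → Fin n → (Fin n → ℝ) → ℝ) (a b c d : Fin n)
    (y : Fin n → ℝ) : curv Γ a b c d y + curv Γ a b d c y = 0 := by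
  simp only [curv]
  have h : (∑ e, (Γ a e c y * Γ e b d y - Γ a e d y * Γ e b c y))
      + ∑ e, (Γ a e d y * Γ e b c y - Γ a e c y * Γ e b d y) = 0 := by
    rw [← Finset.sum_add_distrib]
    exact Finset.sum_eq_zero fun e _ => by ring
  linarith [h]

/-- First Bianchi identity for a torsion-free connection. -/
lemma bianchi (hUo : IsOpen U) {Γ : Fin n → Fin n → Fin n → (Fin n → ℝ) → ℝ}
    (hsym : ∀ a b c, ∀ y ∈ U, Γ a b c y = Γ a c b y) (hx : x ∈ U) (a b c d : Fin n) :
    curv Γ a b c d x + curv Γ a c d b x + curv Γ a d b c x = 0 := by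
  simp only [curv]
  have p1 : pd c (Γ a b d) x = pd c (Γ a d b) x :=
    pd_congr hUo (fun y hy => hsym a b d y hy) hx c
  have p2 : pd d (Γ a c b) x = pd d (Γ a b c) x :=
    pd_congr hUo (fun y hy => hsym a c b y hy) hx d
  have p3 : pd b (Γ a d c) x = pd b (Γ a c d) x :=
    pd_congr hUo (fun y hy => hsym a d c y hy) hx b
  have hq : (∑ e, (Γ a e c x * Γ e b d x - Γ a e d x * Γ e b c x))
      + (∑ e, (Γ a e d x * Γ e c b x - Γ a e b x * Γ e c d x))
      + (∑ e, (Γ a e b x * Γ e d c x - Γ a e c x * Γ e d b x)) = 0 := by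
    rw [← Finset.sum_add_distrib, ← Finset.sum_add_distrib]
    refine Finset.sum_eq_zero fun e _ => ?_
    rw [hsym e b d x hx, hsym e c b x hx, hsym e d c x hx]
    ring
  rw [p1, p2, p3]
  linarith [hq]

lemma sum2_antisymm {F : Fin n → Fin n → ℝ} (h : ∀ e f, F e f + F f e = 0) :
    (∑ e, ∑ f, F e f) = 0 := by
  have h1 : (∑ e, ∑ f, F e f) = ∑ e, ∑ f, F f e := Finset.sum_comm
  have h2 : (∑ e, ∑ f, F e f) + (∑ e, ∑ f, F f e) = 0 := by
    rw [← Finset.sum_add_distrib]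
    refine Finset.sum_eq_zero fun e _ => ?_
    rw [← Finset.sum_add_distrib]
    exact Finset.sum_eq_zero fun f _ => h e f
  linarith

/-- Lowered antisymmetry `R_{(ab)cd} = 0` for the Levi-Civita connection. -/
lemma lowered_antisym (hUo : IsOpen U) (hg : IsMetric U g) (hx : x ∈ U) (a b c d : Fin n) :
    ∑ e, (g b e x * curv (levicivita g) e a c d x
      + g a e x * curv (levicivita g) e b c d x) = 0 := by
  set Γ : Fin n → Fin n → Fin n → (Fin n → ℝ) → ℝ := levicivita g with hΓ
  have hdΓ : ∀ p q r : Fin n, DifferentiableAt ℝ (Γ p q r) x := fun p q r =>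
    diff_lc hUo hg hx p q r
  have hdg : ∀ p q : Fin n, DifferentiableAt ℝ (g p q) x := fun p q =>
    diff_g hUo hg hx p q
  -- expansion of the second derivative of g via compatibility
  have expand : ∀ r s : Fin n, pd s (pd r (g a b)) x
      = ∑ e, (pd s (Γ e a r) x * g e b x + Γ e a r x * pd s (g e b) x
          + (pd s (Γ e b r) x * g a e x + Γ e b r x * pd s (g a e) x)) := by
    intro r s
    have h1 : pd s (pd r (g a b)) x
        = pd s (fun y => ∑ e, (Γ e a r y * g e b y + Γ e b r y * g a e y)) x := by
      refine pd_congr hUo (fun y hy => ?_) hx s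
      exact compat hUo hg hy a b r
    rw [h1]
    rw [pd_sum Finset.univ (fun e _ => by
      exact ((hdΓ e a r).mul (hdg e b)).add ((hdΓ e b r).mul (hdg a e))) s]
    refine Finset.sum_congr rfl fun e _ => ?_
    have hy2 : ∀ y' ∈ U, True := fun _ _ => trivial
    rw [pd_add (f := fun y => Γ e a r y * g e b y) (h := fun y => Γ e b r y * g a e y)
        ((hdΓ e a r).mul (hdg e b)) ((hdΓ e b r).mul (hdg a e)) s,
      pd_mul (hdΓ e a r) (hdg e b) s, pd_mul (hdΓ e b r) (hdg a e) s]
    ring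
  -- the key consequence of symmetry of second derivatives
  have H : ∑ e, ((pd c (Γ e a d) x - pd d (Γ e a c) x) * g e b x
        + (pd c (Γ e b d) x - pd d (Γ e b c) x) * g a e x)
      = ∑ e, (Γ e a c x * pd d (g e b) x + Γ e b c x * pd d (g a e) x
        - Γ e a d x * pd c (g e b) x - Γ e b d x * pd c (g a e) x) := by
    have h4 : ∑ e, (pd c (Γ e a d) x * g e b x + Γ e a d x * pd c (g e b) x
          + (pd c (Γ e b d) x * g a e x + Γ e b d x * pd c (g a e) x))
        = ∑ e, (pd d (Γ e a c) x * g e b x + Γ e a c x * pd d (g e b) x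
          + (pd d (Γ e b c) x * g a e x + Γ e b c x * pd d (g a e) x)) := by
      rw [← expand d c, ← expand c d]
      exact pd_comm hUo (hg.1 a b) hx c d
    have h5 : ∑ e, ((pd c (Γ e a d) x - pd d (Γ e a c) x) * g e b x
          + (pd c (Γ e b d) x - pd d (Γ e b c) x) * g a e x
          - (Γ e a c x * pd d (g e b) x + Γ e b c x * pd d (g a e) x
            - Γ e a d x * pd c (g e b) x - Γ e b d x * pd c (g a e) x))
        = 0 := by
      have h6 : ∀ e : Fin n, (pd c (Γ e a d) x - pd d (Γ e a c) x) * g e b x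
          + (pd c (Γ e b d) x - pd d (Γ e b c) x) * g a e x
          - (Γ e a c x * pd d (g e b) x + Γ e b c x * pd d (g a e) x
            - Γ e a d x * pd c (g e b) x - Γ e b d x * pd c (g a e) x)
          = (pd c (Γ e a d) x * g e b x + Γ e a d x * pd c (g e b) x
            + (pd c (Γ e b d) x * g a e x + Γ e b d x * pd c (g a e) x))
          - (pd d (Γ e a c) x * g e b x + Γ e a c x * pd d (g e b) x
            + (pd d (Γ e b c) x * g a e x + Γ e b c x * pd d (g a e) x)) := by
        intro e; ring
      rw [Finset.sum_congr rfl fun e _ => h6 e, Finset.sum_sub_distrib, h4, sub_self]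
    rw [Finset.sum_sub_distrib] at h5
    linarith
  -- substitute compatibility in the right side of H
  have hsub : ∑ e, (Γ e a c x * pd d (g e b) x + Γ e b c x * pd d (g a e) x
        - Γ e a d x * pd c (g e b) x - Γ e b d x * pd c (g a e) x)
      = ∑ e, ∑ f, (Γ e a c x * (Γ f e d x * g f b x + Γ f b d x * g e f x)
        + Γ e b c x * (Γ f a d x * g f e x + Γ f e d x * g a f x)
        - Γ e a d x * (Γ f e c x * g f b x + Γ f b c x * g e f x)
        - Γ e b d x * (Γ f a c x * g f e x + Γ f e c x * g a f x)) := by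
    refine Finset.sum_congr rfl fun e _ => ?_
    rw [compat hUo hg hx e b d, compat hUo hg hx a e d,
      compat hUo hg hx e b c, compat hUo hg hx a e c]
    rw [Finset.mul_sum, Finset.mul_sum, Finset.mul_sum, Finset.mul_sum,
      ← Finset.sum_add_distrib, ← Finset.sum_sub_distrib, ← Finset.sum_sub_distrib]
  -- rewrite the goal into separated pieces
  have hpoint : ∀ e : Fin n, g b e x * curv Γ e a c d x + g a e x * curv Γ e b c d x
      = ((pd c (Γ e a d) x - pd d (Γ e a c) x) * g e b x
        + (pd c (Γ e b d) x - pd d (Γ e b c) x) * g a e x)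
        + ∑ f, (g e b x * (Γ e f c x * Γ f a d x - Γ e f d x * Γ f a c x)
          + g a e x * (Γ e f c x * Γ f b d x - Γ e f d x * Γ f b c x)) := by
    intro e
    have hq : ∑ f, (g e b x * (Γ e f c x * Γ f a d x - Γ e f d x * Γ f a c x)
          + g a e x * (Γ e f c x * Γ f b d x - Γ e f d x * Γ f b c x))
        = g e b x * (∑ f, (Γ e f c x * Γ f a d x - Γ e f d x * Γ f a c x))
          + g a e x * (∑ f, (Γ e f c x * Γ f b d x - Γ e f d x * Γ f b c x)) := by
      rw [Finset.mul_sum, Finset.mul_sum, ← Finset.sum_add_distrib]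
    rw [hq]
    simp only [curv]
    rw [hg.2.1 b e x hx]
    ring
  rw [Finset.sum_congr rfl fun e _ => hpoint e, Finset.sum_add_distrib, H, hsub,
    ← Finset.sum_add_distrib]
  rw [show (∑ e, (∑ f, (Γ e a c x * (Γ f e d x * g f b x + Γ f b d x * g e f x)
        + Γ e b c x * (Γ f a d x * g f e x + Γ f e d x * g a f x)
        - Γ e a d x * (Γ f e c x * g f b x + Γ f b c x * g e f x)
        - Γ e b d x * (Γ f a c x * g f e x + Γ f e c x * g a f x))
      + ∑ f, (g e b x * (Γ e f c x * Γ f a d x - Γ e f d x * Γ f a c x)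
        + g a e x * (Γ e f c x * Γ f b d x - Γ e f d x * Γ f b c x))))
      = ∑ e, ∑ f, ((Γ e a c x * (Γ f e d x * g f b x + Γ f b d x * g e f x)
        + Γ e b c x * (Γ f a d x * g f e x + Γ f e d x * g a f x)
        - Γ e a d x * (Γ f e c x * g f b x + Γ f b c x * g e f x)
        - Γ e b d x * (Γ f a c x * g f e x + Γ f e c x * g a f x))
      + (g e b x * (Γ e f c x * Γ f a d x - Γ e f d x * Γ f a c x)
        + g a e x * (Γ e f c x * Γ f b d x - Γ e f d x * Γ f b c x)))
      from Finset.sum_congr rfl fun e _ => by rw [← Finset.sum_add_distrib]]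
  exact sum2_antisymm fun e f => by ring

end Curvature


section RicciSymm
open Filter

variable {n : ℕ} {U : Set (Fin n → ℝ)} {x : Fin n → ℝ}
variable {g : Fin n → Fin n → (Fin n → ℝ) → ℝ}

/-- Pair symmetry of the lowered curvature tensor of the Levi-Civita connection. -/
lemma pair_symm (hUo : IsOpen U) (hg : IsMetric U g) (hx : x ∈ U) (a b c d : Fin n) :
    ∑ e, g a e x * curv (levicivita g) e b c d x
      = ∑ e, g c e x * curv (levicivita g) e d a b x := by
  set Γ : Fin n → Fin n → Fin n → (Fin n → ℝ) → ℝ := levicivita g with hΓ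
  have hA : ∀ p q r s : Fin n, (∑ e, g p e x * curv Γ e q r s x)
      + (∑ e, g p e x * curv Γ e q s r x) = 0 := by
    intro p q r s
    rw [← Finset.sum_add_distrib]
    refine Finset.sum_eq_zero fun e _ => ?_
    rw [← mul_add, curv_swap Γ e q r s x, mul_zero]
  have hB : ∀ p q r s : Fin n, (∑ e, g p e x * curv Γ e q r s x)
      + (∑ e, g q e x * curv Γ e p r s x) = 0 := by
    intro p q r s
    have h := lowered_antisym hUo hg hx q p r s
    rwa [Finset.sum_add_distrib] at h
  have hC : ∀ p q r s : Fin n, (∑ e, g p e x * curv Γ e q r s x)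
      + (∑ e, g p e x * curv Γ e r s q x) + (∑ e, g p e x * curv Γ e s q r x) = 0 := by
    intro p q r s
    rw [← Finset.sum_add_distrib, ← Finset.sum_add_distrib]
    refine Finset.sum_eq_zero fun e _ => ?_
    rw [← mul_add, ← mul_add,
      bianchi hUo (fun p' q' r' y hy => lc_symm hUo hg hy p' q' r') hx e q r s, mul_zero]
  linarith [hC a b c d, hC b c d a, hC c d a b, hC d a b c,
    hB a b c d, hB c a b d, hA a c b d, hB d a b c, hB c b d a,
    hB d b c a, hA b d c a, hB d c a b, hA c d b a]

/-- Raising the first index of the lowered curvature. -/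
lemma curv_raise (hg : IsMetric U g) (hx : x ∈ U) (p q r s : Fin n) :
    curv (levicivita g) p q r s x
      = ∑ e, minv g p e x * ∑ f, g e f x * curv (levicivita g) f q r s x := by
  set Γ : Fin n → Fin n → Fin n → (Fin n → ℝ) → ℝ := levicivita g with hΓ
  calc curv Γ p q r s x = ∑ f, kd p f * curv Γ f q r s x :=
        (sum_kd_mul' p fun f => curv Γ f q r s x).symm
    _ = ∑ f, (∑ e, minv g p e x * g e f x) * curv Γ f q r s x :=
        Finset.sum_congr rfl fun f _ => by rw [minv_mul hg hx p f]
    _ = ∑ f, ∑ e, minv g p e x * g e f x * curv Γ f q r s x :=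
        Finset.sum_congr rfl fun f _ => by rw [Finset.sum_mul]
    _ = ∑ e, ∑ f, minv g p e x * g e f x * curv Γ f q r s x := Finset.sum_comm
    _ = ∑ e, minv g p e x * ∑ f, g e f x * curv Γ f q r s x := by
        refine Finset.sum_congr rfl fun e _ => ?_
        rw [Finset.mul_sum]
        exact Finset.sum_congr rfl fun f _ => by ring

/-- The Ricci tensor of the Levi-Civita connection is symmetric. -/
lemma ricci_symm (hUo : IsOpen U) (hg : IsMetric U g) (hx : x ∈ U) (b d : Fin n) :
    ricci (levicivita g) b d x = ricci (levicivita g) d b x := by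
  set Γ : Fin n → Fin n → Fin n → (Fin n → ℝ) → ℝ := levicivita g with hΓ
  have h1 : ricci Γ b d x
      = ∑ a, ∑ e, minv g a e x * ∑ f, g e f x * curv Γ f b a d x := by
    unfold ricci
    exact Finset.sum_congr rfl fun a _ => curv_raise hg hx a b a d
  have h2 : ricci Γ d b x
      = ∑ a, ∑ e, minv g a e x * ∑ f, g e f x * curv Γ f d a b x := by
    unfold ricci
    exact Finset.sum_congr rfl fun a _ => curv_raise hg hx a d a b
  rw [h1, h2]
  symm
  have h3 : ∀ a e : Fin n, minv g a e x * ∑ f, g e f x * curv Γ f d a b x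
      = minv g a e x * ∑ f, g a f x * curv Γ f b e d x := by
    intro a e
    rw [pair_symm hUo hg hx e d a b]
  calc ∑ a, ∑ e, minv g a e x * ∑ f, g e f x * curv Γ f d a b x
      = ∑ a, ∑ e, minv g a e x * ∑ f, g a f x * curv Γ f b e d x :=
        Finset.sum_congr rfl fun a _ => Finset.sum_congr rfl fun e _ => h3 a e
    _ = ∑ e, ∑ a, minv g a e x * ∑ f, g a f x * curv Γ f b e d x := Finset.sum_comm
    _ = ∑ a, ∑ e, minv g e a x * ∑ f, g e f x * curv Γ f b a d x := rfl
    _ = ∑ a, ∑ e, minv g a e x * ∑ f, g e f x * curv Γ f b a d x := by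
        refine Finset.sum_congr rfl fun a _ => Finset.sum_congr rfl fun e _ => ?_
        rw [minv_symm hg hx e a]

end RicciSymm


section Projective
open Filter

variable {n : ℕ} {U : Set (Fin n → ℝ)} {x : Fin n → ℝ}

/-- The tensor `β_{cb} = ∇_c A_b - A_c A_b` appearing in projective changes. -/
noncomputable def pbeta (Γ₀ : Fin n → Fin n → Fin n → (Fin n → ℝ) → ℝ)
    (A : Fin n → (Fin n → ℝ) → ℝ) (c b : Fin n) (x : Fin n → ℝ) : ℝ :=
  pd c (A b) x - (∑ e, A e x * Γ₀ e b c x) - A c x * A b x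

variable {Γ' Γ₀ : Fin n → Fin n → Fin n → (Fin n → ℝ) → ℝ}
variable {A : Fin n → (Fin n → ℝ) → ℝ}

lemma curv_proj (hUo : IsOpen U) (hx : x ∈ U)
    (hΓd : ∀ a b c, DifferentiableAt ℝ (Γ₀ a b c) x)
    (hsym0 : ∀ a b c, Γ₀ a b c x = Γ₀ a c b x)
    (hAd : ∀ a, DifferentiableAt ℝ (A a) x)
    (heq : ∀ a b c, ∀ y ∈ U, Γ' a b c y = Γ₀ a b c y + kd a c * A b y + kd a b * A c y)
    (a b c d : Fin n) :
    curv Γ' a b c d x = curv Γ₀ a b c d x + kd a d * pbeta Γ₀ A c b x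
      - kd a c * pbeta Γ₀ A d b x
      + kd a b * (pbeta Γ₀ A c d x - pbeta Γ₀ A d c x) := by
  have hpd : ∀ p q r s : Fin n, pd s (Γ' p q r) x
      = pd s (Γ₀ p q r) x + kd p r * pd s (A q) x + kd p q * pd s (A r) x := by
    intro p q r s
    have h1 : pd s (Γ' p q r) x
        = pd s (fun y => Γ₀ p q r y + kd p r * A q y + kd p q * A r y) x :=
      pd_congr hUo (fun y hy => heq p q r y hy) hx s
    rw [h1]
    rw [pd_add (f := fun y => Γ₀ p q r y + kd p r * A q y) (h := fun y => kd p q * A r y)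
        ((hΓd p q r).add ((hAd q).const_mul (kd p r))) ((hAd r).const_mul (kd p q)) s,
      pd_add (h := fun y => kd p r * A q y) (hΓd p q r) ((hAd q).const_mul (kd p r)) s,
      pd_const_mul (hAd q) (kd p r) s, pd_const_mul (hAd r) (kd p q) s]
  have hq : ∑ e, (Γ' a e c x * Γ' e b d x - Γ' a e d x * Γ' e b c x)
      = (∑ e, (Γ₀ a e c x * Γ₀ e b d x - Γ₀ a e d x * Γ₀ e b c x))
        + (Γ₀ a d c x * A b x + Γ₀ a b c x * A d x
          + kd a c * (∑ e, A e x * Γ₀ e b d x)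
          + kd a c * (A d x * A b x) + kd a c * (A b x * A d x)
          + A c x * Γ₀ a b d x + kd a d * (A c x * A b x) + kd a b * (A c x * A d x))
        - (Γ₀ a c d x * A b x + Γ₀ a b d x * A c x
          + kd a d * (∑ e, A e x * Γ₀ e b c x)
          + kd a d * (A c x * A b x) + kd a d * (A b x * A c x)
          + A d x * Γ₀ a b c x + kd a c * (A d x * A b x) + kd a b * (A d x * A c x)) := by
    have hterm : ∀ e : Fin n, Γ' a e c x * Γ' e b d x - Γ' a e d x * Γ' e b c x
        = (Γ₀ a e c x * Γ₀ e b d x - Γ₀ a e d x * Γ₀ e b c x)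
          + (kd e d * (Γ₀ a e c x * A b x) + kd e b * (Γ₀ a e c x * A d x)
            + kd a c * (A e x * Γ₀ e b d x)
            + kd a c * (kd e d * (A e x * A b x)) + kd a c * (kd e b * (A e x * A d x))
            + kd a e * (A c x * Γ₀ e b d x)
            + kd a e * (kd e d * (A c x * A b x)) + kd a e * (kd e b * (A c x * A d x)))
          - (kd e c * (Γ₀ a e d x * A b x) + kd e b * (Γ₀ a e d x * A c x)
            + kd a d * (A e x * Γ₀ e b c x)
            + kd a d * (kd e c * (A e x * A b x)) + kd a d * (kd e b * (A e x * A c x))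
            + kd a e * (A d x * Γ₀ e b c x)
            + kd a e * (kd e c * (A d x * A b x)) + kd a e * (kd e b * (A d x * A c x))) := by
      intro e
      rw [heq a e c x hx, heq e b d x hx, heq a e d x hx, heq e b c x hx]
      ring
    rw [Finset.sum_congr rfl fun e _ => hterm e]
    simp only [Finset.sum_sub_distrib, Finset.sum_add_distrib, ← Finset.mul_sum]
    rw [sum_kd_mul d (fun e => Γ₀ a e c x * A b x), sum_kd_mul b (fun e => Γ₀ a e c x * A d x),
      sum_kd_mul d (fun e => A e x * A b x), sum_kd_mul b (fun e => A e x * A d x),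
      sum_kd_mul' a (fun e => A c x * Γ₀ e b d x),
      sum_kd_mul' a (fun e => kd e d * (A c x * A b x)),
      sum_kd_mul' a (fun e => kd e b * (A c x * A d x)),
      sum_kd_mul c (fun e => Γ₀ a e d x * A b x), sum_kd_mul b (fun e => Γ₀ a e d x * A c x),
      sum_kd_mul c (fun e => A e x * A b x), sum_kd_mul b (fun e => A e x * A c x),
      sum_kd_mul' a (fun e => A d x * Γ₀ e b c x),
      sum_kd_mul' a (fun e => kd e c * (A d x * A b x)),
      sum_kd_mul' a (fun e => kd e b * (A d x * A c x))]
  have hTsym : (∑ e, A e x * Γ₀ e d c x) = ∑ e, A e x * Γ₀ e c d x :=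
    Finset.sum_congr rfl fun e _ => by rw [hsym0 e d c]
  simp only [curv]
  rw [hpd a b d c, hpd a b c d, hq]
  simp only [pbeta]
  rw [hsym0 a d c, hTsym]
  ring

lemma ricci_proj (hUo : IsOpen U) (hx : x ∈ U)
    (hΓd : ∀ a b c, DifferentiableAt ℝ (Γ₀ a b c) x)
    (hsym0 : ∀ a b c, Γ₀ a b c x = Γ₀ a c b x)
    (hAd : ∀ a, DifferentiableAt ℝ (A a) x)
    (heq : ∀ a b c, ∀ y ∈ U, Γ' a b c y = Γ₀ a b c y + kd a c * A b y + kd a b * A c y)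
    (b d : Fin n) :
    ricci Γ' b d x = ricci Γ₀ b d x + pbeta Γ₀ A b d x - n * pbeta Γ₀ A d b x := by
  unfold ricci
  rw [Finset.sum_congr rfl fun a _ => curv_proj hUo hx hΓd hsym0 hAd heq a b a d]
  simp only [Finset.sum_add_distrib, Finset.sum_sub_distrib]
  rw [sum_kd_mul d (fun a => pbeta Γ₀ A a b x),
    sum_kd_mul b (fun a => pbeta Γ₀ A a d x - pbeta Γ₀ A d a x)]
  have h1 : ∑ a : Fin n, kd a a * pbeta Γ₀ A d b x = n * pbeta Γ₀ A d b x := by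
    have : ∀ a : Fin n, kd a a * pbeta Γ₀ A d b x = pbeta Γ₀ A d b x := by
      intro a; simp [kd]
    rw [Finset.sum_congr rfl fun a _ => this a, Finset.sum_const, Finset.card_univ,
      Fintype.card_fin, nsmul_eq_mul]
  rw [h1]
  ring

lemma schouten_proj (hn : 3 ≤ n) (hUo : IsOpen U) (hx : x ∈ U)
    (hΓd : ∀ a b c, DifferentiableAt ℝ (Γ₀ a b c) x)
    (hsym0 : ∀ a b c, Γ₀ a b c x = Γ₀ a c b x)
    (hAd : ∀ a, DifferentiableAt ℝ (A a) x)
    (heq : ∀ a b c, ∀ y ∈ U, Γ' a b c y = Γ₀ a b c y + kd a c * A b y + kd a b * A c y)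
    (a b : Fin n) :
    schouten Γ' a b x = schouten Γ₀ a b x - pbeta Γ₀ A a b x := by
  have hn1 : ((n : ℝ) - 1) ≠ 0 := by
    have : (3 : ℝ) ≤ (n : ℝ) := by exact_mod_cast hn
    linarith
  have hn2 : ((n : ℝ) + 1) ≠ 0 := by
    have : (3 : ℝ) ≤ (n : ℝ) := by exact_mod_cast hn
    linarith
  unfold schouten
  rw [ricci_proj hUo hx hΓd hsym0 hAd heq a b, ricci_proj hUo hx hΓd hsym0 hAd heq b a]
  field_simp
  ring

lemma weyl_proj (hn : 3 ≤ n) (hUo : IsOpen U) (hx : x ∈ U)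
    (hΓd : ∀ a b c, DifferentiableAt ℝ (Γ₀ a b c) x)
    (hsym0 : ∀ a b c, Γ₀ a b c x = Γ₀ a c b x)
    (hAd : ∀ a, DifferentiableAt ℝ (A a) x)
    (heq : ∀ a b c, ∀ y ∈ U, Γ' a b c y = Γ₀ a b c y + kd a c * A b y + kd a b * A c y)
    (a b c d : Fin n) :
    weyl Γ' a b c d x = weyl Γ₀ a b c d x := by
  unfold weyl
  rw [curv_proj hUo hx hΓd hsym0 hAd heq a b c d,
    schouten_proj hn hUo hx hΓd hsym0 hAd heq d b,
    schouten_proj hn hUo hx hΓd hsym0 hAd heq c b,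
    schouten_proj hn hUo hx hΓd hsym0 hAd heq c d,
    schouten_proj hn hUo hx hΓd hsym0 hAd heq d c]
  ring

end Projective


section Endgame
open Filter

variable {n : ℕ} {U : Set (Fin n → ℝ)} {x : Fin n → ℝ}
variable {g : Fin n → Fin n → (Fin n → ℝ) → ℝ}

/-- Part (i): the projective Schouten tensor of a Levi-Civita connection is symmetric. -/
lemma schouten_lc_symm (hUo : IsOpen U) (hg : IsMetric U g) (hx : x ∈ U) (a b : Fin n) :
    schouten (levicivita g) a b x = schouten (levicivita g) b a x := by
  simp only [schouten]
  rw [ricci_symm hUo hg hx a b]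

lemma sum3_swap (X : Fin n → Fin n → Fin n → ℝ) :
    (∑ e, ∑ b, ∑ c, X e b c) = ∑ b, ∑ c, ∑ e, X e b c := by
  rw [Finset.sum_comm]
  exact Finset.sum_congr rfl fun b _ => Finset.sum_comm

/-- Part (ii) for the Levi-Civita connection itself. -/
lemma weyl_contract_symm (hn : 3 ≤ n) (hUo : IsOpen U) (hg : IsMetric U g)
    (hx : x ∈ U) (a d : Fin n) :
    (∑ e, ∑ b, ∑ c, g a e x * minv g b c x * weyl (levicivita g) e b c d x)
      = ∑ e, ∑ b, ∑ c, g d e x * minv g b c x * weyl (levicivita g) e b c a x := by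
  set Γ : Fin n → Fin n → Fin n → (Fin n → ℝ) → ℝ := levicivita g with hΓ
  have hP : ∀ p q : Fin n, schouten Γ p q x = schouten Γ q p x := fun p q =>
    schouten_lc_symm hUo hg hx p q
  have contract : ∀ p q : Fin n,
      (∑ e, ∑ b, ∑ c, g p e x * minv g b c x * weyl Γ e b c q x)
        = (∑ b, ∑ c, minv g b c x * ∑ e, g p e x * curv Γ e b c q x)
          - schouten Γ q p x
          + g p q x * (∑ b, ∑ c, minv g b c x * schouten Γ c b x) := by
    intro p q
    rw [sum3_swap (fun e b c => g p e x * minv g b c x * weyl Γ e b c q x)]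
    have inner : ∀ b c : Fin n, ∑ e, g p e x * minv g b c x * weyl Γ e b c q x
        = minv g b c x * (∑ e, g p e x * curv Γ e b c q x)
          - minv g b c x * (g p c x * schouten Γ q b x)
          + g p q x * (minv g b c x * schouten Γ c b x) := by
      intro b c
      have hterm : ∀ e : Fin n, g p e x * minv g b c x * weyl Γ e b c q x
          = minv g b c x * (g p e x * curv Γ e b c q x)
            - kd e c * (minv g b c x * (g p e x * schouten Γ q b x))
            + kd e q * (minv g b c x * (g p e x * schouten Γ c b x))
            + kd e b * (minv g b c x * (g p e x
              * (schouten Γ c q x - schouten Γ q c x))) := by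
        intro e; simp only [weyl]; ring
      rw [Finset.sum_congr rfl fun e _ => hterm e]
      simp only [Finset.sum_add_distrib, Finset.sum_sub_distrib, ← Finset.mul_sum]
      rw [sum_kd_mul c (fun e => minv g b c x * (g p e x * schouten Γ q b x)),
        sum_kd_mul q (fun e => minv g b c x * (g p e x * schouten Γ c b x)),
        sum_kd_mul b (fun e => minv g b c x
          * (g p e x * (schouten Γ c q x - schouten Γ q c x)))]
      rw [hP c q]
      ring
    rw [Finset.sum_congr rfl fun b _ => Finset.sum_congr rfl fun c _ => inner b c]
    simp only [Finset.sum_add_distrib, Finset.sum_sub_distrib, ← Finset.mul_sum]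
    have piece2 : ∀ b : Fin n,
        ∑ c, minv g b c x * (g p c x * schouten Γ q b x) = kd b p * schouten Γ q b x := by
      intro b
      have h' : ∀ c : Fin n, minv g b c x * (g p c x * schouten Γ q b x)
          = (minv g b c x * g c p x) * schouten Γ q b x := by
        intro c; rw [hg.2.1 p c x hx]; ring
      rw [Finset.sum_congr rfl fun c _ => h' c, ← Finset.sum_mul, minv_mul hg hx b p]
    rw [Finset.sum_congr rfl fun b _ => piece2 b, sum_kd_mul p (fun b => schouten Γ q b x)]
  rw [contract a d, contract d a]
  have hQ : (∑ b, ∑ c, minv g b c x * ∑ e, g d e x * curv Γ e b c a x)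
      = ∑ b, ∑ c, minv g b c x * ∑ e, g a e x * curv Γ e b c d x := by
    have hE : ∀ b c : Fin n, (∑ e, g b e x * curv Γ e a d c x)
        = ∑ e, g a e x * curv Γ e b c d x := by
      intro b c
      have t1 := lowered_antisym hUo hg hx a b d c
      rw [Finset.sum_add_distrib] at t1
      have t2 : (∑ e, g a e x * curv Γ e b d c x)
          + (∑ e, g a e x * curv Γ e b c d x) = 0 := by
        rw [← Finset.sum_add_distrib]
        exact Finset.sum_eq_zero fun e _ => by rw [← mul_add, curv_swap Γ e b d c x, mul_zero]
      linarith
    calc ∑ b, ∑ c, minv g b c x * ∑ e, g d e x * curv Γ e b c a x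
        = ∑ b, ∑ c, minv g b c x * ∑ e, g c e x * curv Γ e a d b x :=
          Finset.sum_congr rfl fun b _ => Finset.sum_congr rfl fun c _ => by
            rw [pair_symm hUo hg hx d b c a]
      _ = ∑ c, ∑ b, minv g b c x * ∑ e, g c e x * curv Γ e a d b x := Finset.sum_comm
      _ = ∑ b, ∑ c, minv g b c x * ∑ e, g a e x * curv Γ e b c d x := by
          refine Finset.sum_congr rfl fun b _ => Finset.sum_congr rfl fun c _ => ?_
          rw [minv_symm hg hx c b, hE b c]
  rw [hQ, hP d a, hg.2.1 a d x hx]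

end Endgame

/-- For `n ≥ 3` and a metric `ĝ` with Levi-Civita connection `Γ̂`:
(i) the projective Schouten tensor of `Γ̂` is symmetric; (ii) every torsion-free
connection projectively equivalent to `Γ̂` has projective Weyl tensor satisfying
`Σ ĝ_{ae} ĝ^{bc} W^e_{bcd} = Σ ĝ_{de} ĝ^{bc} W^e_{bca}` (Corollary 2.2). -/
theorem levicivita_schouten_symm_and_weyl_symmetry {n : ℕ} (hn : 3 ≤ n)
    (U : Set (Fin n → ℝ)) (hUo : IsOpen U) (hUne : U.Nonempty)
    (g : Fin n → Fin n → (Fin n → ℝ) → ℝ) (hg : IsMetric U g) :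
    (∀ a b : Fin n, ∀ x ∈ U,
        schouten (levicivita g) a b x = schouten (levicivita g) b a x) ∧
    (∀ Γ : Fin n → Fin n → Fin n → (Fin n → ℝ) → ℝ, IsConn U Γ →
      ProjEquiv U Γ (levicivita g) →
      ∀ x ∈ U, ∀ a d : Fin n,
        (∑ e, ∑ b, ∑ c, g a e x * minv g b c x * weyl Γ e b c d x)
          = ∑ e, ∑ b, ∑ c, g d e x * minv g b c x * weyl Γ e b c a x) := by
  constructor
  · intro a b x hx
    exact schouten_lc_symm hUo hg hx a b
  · intro Γ hΓ hPE x hx a d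
    obtain ⟨A, hAsm, heq⟩ := hPE
    have hΓd : ∀ p q r, DifferentiableAt ℝ (levicivita g p q r) x := fun p q r =>
      diff_lc hUo hg hx p q r
    have hsym0 : ∀ p q r, levicivita g p q r x = levicivita g p r q x := fun p q r =>
      lc_symm hUo hg hx p q r
    have hAd : ∀ p, DifferentiableAt ℝ (A p) x := fun p =>
      ((hAsm p).contDiffAt (hUo.mem_nhds hx)).differentiableAt (by simp)
    have hW : ∀ e b c q, weyl Γ e b c q x = weyl (levicivita g) e b c q x := fun e b c q =>
      weyl_proj hn hUo hx hΓd hsym0 hAd heq e b c q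
    have h1 : (∑ e, ∑ b, ∑ c, g a e x * minv g b c x * weyl Γ e b c d x)
        = ∑ e, ∑ b, ∑ c, g a e x * minv g b c x * weyl (levicivita g) e b c d x :=
      Finset.sum_congr rfl fun e _ => Finset.sum_congr rfl fun b _ =>
        Finset.sum_congr rfl fun c _ => by rw [hW e b c d]
    have h2 : (∑ e, ∑ b, ∑ c, g d e x * minv g b c x * weyl Γ e b c a x)
        = ∑ e, ∑ b, ∑ c, g d e x * minv g b c x * weyl (levicivita g) e b c a x :=
      Finset.sum_congr rfl fun e _ => Finset.sum_congr rfl fun b _ =>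
        Finset.sum_congr rfl fun c _ => by rw [hW e b c a]
    rw [h1, h2]
    exact weyl_contract_symm hn hUo hg hx a d
end
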